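/- Let λ > 0. For every constant c < 1 there exists an integer j₀ (depending on c and λ) such that for every integer j > j₀, J_j(λ)² / ‖b_{λ,j}‖²_{L²(ν_0)} ≥ c · j/4, where ‖b_{λ,j}‖²_{L²(ν_0)} = 2 ∫_0^1 r J_j(λr)² dr is the squared norm of the Fourier-Bessel function on the closed unit disk with respect to the normalized uniform measure. In other words, J_j(λ)² / ‖b_{λ,j}‖²_{L²(ν_0)} ∼ j/4 as j → ∞. -/

import Mathlib

open MeasureTheory Metric

/-- Bessel function of the first kind of nonnegative integer order. -/
noncomputable def besselJnat (n : ℕ) (x : ℝ) : ℝ :=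
  ∑' k : ℕ, ((-1 : ℝ) ^ k / ((Nat.factorial k : ℝ) * (Nat.factorial (n + k) : ℝ))) *
    (x / 2) ^ (n + 2 * k)

/-- Bessel function of the first kind of integer order, with `J_{-n} = (-1)^n J_n`. -/
noncomputable def besselJ (n : ℤ) (x : ℝ) : ℝ :=
  if 0 ≤ n then besselJnat n.toNat x else (-1 : ℝ) ^ n.natAbs * besselJnat n.natAbs x

/-- The Fourier-Bessel function `b_{λ,j}(x) = e^{ijθ} J_j(λ r)` on `ℝ² ≃ ℂ`. -/
noncomputable def fourierBessel (lam : ℝ) (j : ℤ) (z : ℂ) : ℂ :=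
  Complex.exp (Complex.I * j * z.arg) * besselJ j (lam * ‖z‖)

/-- Normalized uniform measure `dx/π` on the closed unit disk. -/
noncomputable def unifDisk : Measure ℂ :=
  (ENNReal.ofReal Real.pi)⁻¹ • (volume.restrict (closedBall (0 : ℂ) 1))

/-- Normalized arc-length measure `dσ/(2π)` on the unit circle. -/
noncomputable def circleUnif : Measure ℂ :=
  (ENNReal.ofReal (2 * Real.pi))⁻¹ •
    Measure.map (fun θ : ℝ => Complex.exp (θ * Complex.I))
      (volume.restrict (Set.Ioc (0 : ℝ) (2 * Real.pi)))

/-- The mixed measure `ν_α = (1-α) dx/π + α dσ/(2π)`. -/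
noncomputable def nuAlpha (a : ℝ) : Measure ℂ :=
  ENNReal.ofReal (1 - a) • unifDisk + ENNReal.ofReal a • circleUnif

/-- Squared `L²(ν)` norm of a function. -/
noncomputable def l2normSq (ν : Measure ℂ) (f : ℂ → ℂ) : ℝ :=
  ∫ z, ‖f z‖ ^ 2 ∂ν

/-- A measure on `ℂ` invariant under every rotation about the origin. -/
def RotationInvariant (ν : Measure ℂ) : Prop :=
  ∀ θ : ℝ, Measure.map (fun z : ℂ => Complex.exp (θ * Complex.I) * z) ν = ν

/-- Plane wave `e^{i k·x}` with wave vector `k = λ(cos φ, sin φ)`. -/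
noncomputable def planeWaveFn (lam phi : ℝ) (z : ℂ) : ℂ :=
  Complex.exp (Complex.I * ((lam * (Real.cos phi * z.re + Real.sin phi * z.im) : ℝ) : ℂ))

/-- Angle `φ_l = 2πl/(2m+1)`. -/
noncomputable def phiAngle (m : ℕ) (l : ℤ) : ℝ := 2 * Real.pi * l / (2 * m + 1)

/-- Discretized plane-wave combination
`b_j^m = (1/((2m+1) i^j)) Σ_{l=-m}^m e^{ijφ_l} e_{k_l}`. -/
noncomputable def pwave (lam : ℝ) (m : ℕ) (j : ℤ) (z : ℂ) : ℂ :=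
  (1 / (((2 * m + 1 : ℕ) : ℂ) * Complex.I ^ j)) *
    ∑ l ∈ Finset.Icc (-(m : ℤ)) (m : ℤ),
      Complex.exp (Complex.I * j * ((phiAngle m l : ℝ) : ℂ)) * planeWaveFn lam (phiAngle m l) z

/-- The quantity `K(V_m^b, ν)` for the Fourier-Bessel space on the unit disk. -/
noncomputable def Kb (lam : ℝ) (ν : Measure ℂ) (m : ℕ) : ℝ :=
  ⨆ z : closedBall (0 : ℂ) 1,
    ∑ j ∈ Finset.Icc (-(m : ℤ)) (m : ℤ),
      ‖fourierBessel lam j ↑z‖ ^ 2 / l2normSq ν (fourierBessel lam j)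

/-- The quantity `K(V_m^e, ν)` for the plane-wave space on the unit disk. -/
noncomputable def Ke (lam : ℝ) (ν : Measure ℂ) (m : ℕ) : ℝ :=
  ⨆ z : closedBall (0 : ℂ) 1,
    ∑ j ∈ Finset.Icc (-(m : ℤ)) (m : ℤ),
      ‖pwave lam m j ↑z‖ ^ 2 / l2normSq ν (pwave lam m j)

/-- Laplacian of a function on `ℝ² ≃ ℂ`. -/
noncomputable def laplacian2 (u : ℂ → ℂ) (z : ℂ) : ℂ :=
  fderiv ℝ (fun w => fderiv ℝ u w 1) z 1 + fderiv ℝ (fun w => fderiv ℝ u w Complex.I) z Complex.I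

/-! For `x ≥ 0`, the bound `n! (n+1)^k ≤ (n+k)!` dominates the Bessel series termwise by
`(x/2)^n/n! · y^k/k!` with `y = (x/2)²/(n+1)`, so `|J_n(x) - (x/2)^n/n!| ≤ (x/2)^n/n! · (e^y - 1)`.
On the unit disk this gives `T(2 - E)|z|^n ≤ |b_{λ,n}(z)| ≤ T E |z|^n` with `T = (λ/2)^n/n!` and
`E = exp((λ/2)²/(n+1))`, and integrating `|z|^{2n}` against `dx/π` gives
`J_n(λ)² / ‖b_{λ,n}‖² ≥ (n+1)((2 - E)/E)²`. Since `E → 1`, this eventually exceeds `c n/4`. -/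

open Real Set Filter Topology
open scoped Nat

noncomputable def besselJnatTerm (n k : ℕ) (x : ℝ) : ℝ :=
  (-1 : ℝ) ^ k / ((k ! : ℝ) * ((n + k)! : ℝ)) * (x / 2) ^ (n + 2 * k)

lemma besselJnat_eq_tsum (n : ℕ) (x : ℝ) : besselJnat n x = ∑' k, besselJnatTerm n k x := rfl

lemma abs_besselJnatTerm_le (n k : ℕ) (x : ℝ) :
    |besselJnatTerm n k x| ≤ (|x| / 2) ^ n / n ! * (((|x| / 2) ^ 2 / (n + 1)) ^ k / k !) := by
  have hfac : (n ! : ℝ) * (n + 1) ^ k ≤ (n + k)! := by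
    exact_mod_cast Nat.factorial_mul_pow_le_factorial
  calc |besselJnatTerm n k x| = (|x| / 2) ^ (n + 2 * k) / (k ! * (n + k)!) := by
        simp only [besselJnatTerm, abs_mul, abs_div, abs_pow, abs_neg, abs_one, one_pow,
          Nat.abs_cast, Nat.abs_ofNat]
        ring
    _ ≤ (|x| / 2) ^ (n + 2 * k) / (k ! * (n ! * (n + 1) ^ k)) := by gcongr
    _ = _ := by rw [pow_add, pow_mul]; ring

lemma abs_besselJnat_sub_le (n : ℕ) (x : ℝ) :
    |besselJnat n x - (x / 2) ^ n / n !|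
      ≤ (|x| / 2) ^ n / n ! * (exp ((|x| / 2) ^ 2 / (n + 1)) - 1) := by
  set T := (|x| / 2) ^ n / (n ! : ℝ)
  set y := (|x| / 2) ^ 2 / (n + 1)
  have hmaj : HasSum (fun k => T * (y ^ k / k !)) (T * exp y) := by
    rw [exp_eq_exp_ℝ]; exact (NormedSpace.expSeries_div_hasSum_exp y).mul_left T
  have hle (k : ℕ) : ‖besselJnatTerm n k x‖ ≤ T * (y ^ k / k !) := abs_besselJnatTerm_le n k x
  have htail : HasSum (fun k => T * (y ^ (k + 1) / (k + 1)!)) (T * (exp y - 1)) := by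
    simpa [mul_sub] using (hasSum_nat_add_iff' 1).2 hmaj
  have hsum : Summable (besselJnatTerm n · x) := .of_norm_bounded hmaj.summable hle
  have h0 : besselJnatTerm n 0 x = (x / 2) ^ n / n ! := by
    simp only [besselJnatTerm, pow_zero, Nat.factorial_zero, Nat.cast_one, add_zero, one_mul,
      mul_zero]
    ring
  rw [besselJnat_eq_tsum, hsum.tsum_eq_zero_add, h0, add_sub_cancel_left]
  exact tsum_of_norm_bounded htail fun k => hle (k + 1)

lemma continuous_besselJnat (n : ℕ) : Continuous (besselJnat n) := by
  have hR (R : ℝ) : ContinuousOn (besselJnat n) (Icc (-R) R) :=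
    continuousOn_tsum (fun k => by fun_prop)
      ((Real.summable_pow_div_factorial ((R / 2) ^ 2 / (n + 1))).mul_left ((R / 2) ^ n / n !))
      fun k x hx => by
        have hxR : |x| ≤ R := abs_le.2 hx
        refine (abs_besselJnatTerm_le n k x).trans ?_
        have hR0 : 0 ≤ R := (abs_nonneg x).trans hxR
        gcongr
  refine continuous_iff_continuousAt.2 fun x => (hR (|x| + 1)).continuousAt (Icc_mem_nhds ?_ ?_)
  · linarith [neg_abs_le x]
  · linarith [le_abs_self x]

lemma abs_besselJnat_mul_sub_le {lam r : ℝ} (hlam : 0 ≤ lam) (hr : r ∈ Icc (0 : ℝ) 1) (n : ℕ) :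
    |besselJnat n (lam * r) - (lam / 2) ^ n / n ! * r ^ n|
      ≤ (lam / 2) ^ n / n ! * r ^ n * (exp ((lam / 2) ^ 2 / (n + 1)) - 1) := by
  have hx : |lam * r| = lam * r := abs_of_nonneg (mul_nonneg hlam hr.1)
  have hscale : (lam * r / 2) ^ n / n ! = (lam / 2) ^ n / n ! * r ^ n := by ring
  have hlr : lam * r ≤ lam := mul_le_of_le_one_right hlam hr.2
  have h := abs_besselJnat_sub_le n (lam * r)
  rw [hx, hscale] at h
  have hr0 := hr.1
  refine h.trans (mul_le_mul_of_nonneg_left (sub_le_sub_right (exp_le_exp.2 ?_) 1) ?_)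
  · gcongr
  · positivity

lemma integral_closedBall_norm_pow (m : ℕ) :
    ∫ z in closedBall (0 : ℂ) 1, ‖z‖ ^ m = 2 * π / (m + 2) := by
  have hind : (closedBall (0 : ℂ) 1).indicator (‖·‖ ^ m)
      = fun z => (Iic (1 : ℝ)).indicator (· ^ m) ‖z‖ := by
    ext z; simp only [indicator, mem_closedBall_zero_iff, mem_Iic]
  have hradial : ∫ r in Ioi (0 : ℝ), r ^ (2 - 1) • (Iic (1 : ℝ)).indicator (· ^ m) r
      = ∫ r in Ioc (0 : ℝ) 1, r ^ (m + 1) := by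
    rw [← Ioi_inter_Iic, ← setIntegral_indicator measurableSet_Iic]
    refine setIntegral_congr_fun measurableSet_Ioi fun r _ => ?_
    by_cases hr : r ≤ 1 <;> simp [hr, pow_succ, mul_comm]
  rw [← integral_indicator measurableSet_closedBall, hind, integral_fun_norm_addHaar,
    Complex.finrank_real_complex, hradial, ← intervalIntegral.integral_of_le zero_le_one,
    integral_pow, measureReal_def, Complex.volume_ball, ENNReal.ofReal_one, one_pow, one_mul,
    ENNReal.coe_toReal, NNReal.coe_real_pi, one_pow, zero_pow (by omega), sub_zero, nsmul_eq_mul,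
    smul_eq_mul]
  push_cast
  field_simp
  ring

lemma integral_unifDisk (g : ℂ → ℝ) :
    ∫ z, g z ∂unifDisk = π⁻¹ * ∫ z in closedBall (0 : ℂ) 1, g z := by
  rw [unifDisk, integral_smul_measure, ENNReal.toReal_inv, ENNReal.toReal_ofReal pi_pos.le,
    smul_eq_mul]

lemma l2normSq_unifDisk_mem_Icc {f : ℂ → ℂ} (hf : ContinuousOn (‖f ·‖) (closedBall 0 1))
    {a b : ℝ} (ha : 0 ≤ a) (n : ℕ)
    (hbound : ∀ z ∈ closedBall (0 : ℂ) 1, ‖f z‖ ∈ Icc (a * ‖z‖ ^ n) (b * ‖z‖ ^ n)) :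
    l2normSq unifDisk f ∈ Icc (a ^ 2 / (n + 1)) (b ^ 2 / (n + 1)) := by
  have hball := isCompact_closedBall (0 : ℂ) 1
  have hint (c : ℝ) : IntegrableOn (fun z : ℂ => c ^ 2 * ‖z‖ ^ (2 * n)) (closedBall 0 1) :=
    (by fun_prop : Continuous _).continuousOn.integrableOn_compact hball
  have hval (c : ℝ) :
      π⁻¹ * ∫ z in closedBall (0 : ℂ) 1, c ^ 2 * ‖z‖ ^ (2 * n) = c ^ 2 / (n + 1) := by
    rw [integral_const_mul, integral_closedBall_norm_pow]
    push_cast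
    field_simp
  have hf2 : IntegrableOn (‖f ·‖ ^ 2) (closedBall 0 1) := (hf.pow 2).integrableOn_compact hball
  have hsq (z : ℂ) (hz : z ∈ closedBall (0 : ℂ) 1) :
      ‖f z‖ ^ 2 ∈ Icc (a ^ 2 * ‖z‖ ^ (2 * n)) (b ^ 2 * ‖z‖ ^ (2 * n)) := by
    obtain ⟨hlo, hhi⟩ := hbound z hz
    rw [pow_mul', ← mul_pow, ← mul_pow]
    exact ⟨pow_le_pow_left₀ (by positivity) hlo 2, pow_le_pow_left₀ (by positivity) hhi 2⟩
  rw [l2normSq, integral_unifDisk, ← hval a, ← hval b]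
  exact ⟨mul_le_mul_of_nonneg_left (setIntegral_mono_on (hint a) hf2 measurableSet_closedBall
      fun z hz => (hsq z hz).1) (by positivity),
    mul_le_mul_of_nonneg_left (setIntegral_mono_on hf2 (hint b) measurableSet_closedBall
      fun z hz => (hsq z hz).2) (by positivity)⟩

lemma besselJ_natCast (n : ℕ) (x : ℝ) : besselJ n x = besselJnat n x := by
  simp [besselJ]

lemma norm_fourierBessel (lam : ℝ) (j : ℤ) (z : ℂ) :
    ‖fourierBessel lam j z‖ = |besselJ j (lam * ‖z‖)| := by
  rw [fourierBessel, norm_mul, Complex.norm_exp, Complex.norm_real, Real.norm_eq_abs]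
  simp

lemma succ_mul_sq_le_besselJ_sq_div_l2normSq {lam : ℝ} (hlam : 0 < lam) {n : ℕ}
    (hE : exp ((lam / 2) ^ 2 / (n + 1)) < 2) :
    (n + 1) * ((2 - exp ((lam / 2) ^ 2 / (n + 1))) / exp ((lam / 2) ^ 2 / (n + 1))) ^ 2
      ≤ besselJ n lam ^ 2 / l2normSq unifDisk (fourierBessel lam n) := by
  set T := (lam / 2) ^ n / (n ! : ℝ)
  set E := exp ((lam / 2) ^ 2 / (n + 1))
  have hT : 0 < T := by positivity
  have hE2 : 0 < 2 - E := by linarith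
  have hbound (r : ℝ) (hr : r ∈ Icc (0 : ℝ) 1) :
      |besselJnat n (lam * r)| ∈ Icc (T * (2 - E) * r ^ n) (T * E * r ^ n) := by
    have h := abs_sub_le_iff.1 (abs_besselJnat_mul_sub_le hlam.le hr n)
    have : 0 ≤ T * (2 - E) * r ^ n := by have := hr.1; positivity
    exact ⟨le_abs.2 (Or.inl (by linarith)), abs_le.2 ⟨by linarith, by linarith⟩⟩
  have hcont : ContinuousOn (‖fourierBessel lam n ·‖) (closedBall 0 1) := by
    simp only [norm_fourierBessel, besselJ_natCast]
    exact ((continuous_besselJnat n).comp (by fun_prop)).abs.continuousOn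
  have hN := l2normSq_unifDisk_mem_Icc hcont (a := T * (2 - E)) (b := T * E) (by positivity) n
    fun z hz => by
      rw [norm_fourierBessel, besselJ_natCast]
      exact hbound ‖z‖ ⟨norm_nonneg z, mem_closedBall_zero_iff.1 hz⟩
  have hJ : T * (2 - E) ≤ |besselJ n lam| := by
    simpa [besselJ_natCast] using (hbound 1 ⟨zero_le_one, le_rfl⟩).1
  calc (n + 1) * ((2 - E) / E) ^ 2 = (T * (2 - E)) ^ 2 / ((T * E) ^ 2 / (n + 1)) := by
        field_simp
    _ ≤ |besselJ n lam| ^ 2 / l2normSq unifDisk (fourierBessel lam n) :=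
        div_le_div₀ (sq_nonneg _) (pow_le_pow_left₀ (by positivity) hJ 2)
          (lt_of_lt_of_le (by positivity) hN.1) hN.2
    _ = besselJ n lam ^ 2 / l2normSq unifDisk (fourierBessel lam n) := by rw [sq_abs]

/-- For every `c < 1` there exists `j₀` such that for all integers `j > j₀`,
`J_j(λ)² / ‖b_{λ,j}‖²_{L²(ν₀)} ≥ c · j/4`. -/
theorem stmt_6 (lam : ℝ) (hlam : 0 < lam) :
    ∀ c : ℝ, c < 1 → ∃ j₀ : ℕ, ∀ j : ℕ, j₀ < j →
      c * (j : ℝ) / 4 ≤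
        (besselJ (j : ℤ) lam) ^ 2 / l2normSq unifDisk (fourierBessel lam (j : ℤ)) := by
  intro c hc
  have hE : Tendsto (fun n : ℕ => exp ((lam / 2) ^ 2 / (n + 1))) atTop (𝓝 1) := by
    simpa [Function.comp_def] using (continuous_exp.tendsto 0).comp
      (tendsto_const_nhds.div_atTop (tendsto_natCast_atTop_atTop.atTop_add tendsto_const_nhds))
  obtain ⟨j₀, hj₀⟩ := eventually_atTop.1 (hE.eventually_lt_const (by norm_num : (1 : ℝ) < 4 / 3))
  refine ⟨j₀, fun j hj => ?_⟩
  set E := exp ((lam / 2) ^ 2 / (j + 1))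
  have hE43 : E < 4 / 3 := hj₀ j hj.le
  have hhalf : 1 / 2 ≤ (2 - E) / E := by rw [le_div_iff₀ (exp_pos _)]; linarith
  calc c * j / 4 ≤ (j + 1) * (1 / 2) ^ 2 := by
        nlinarith [mul_nonneg (sub_nonneg.2 hc.le) (Nat.cast_nonneg j : (0 : ℝ) ≤ j)]
    _ ≤ (j + 1) * ((2 - E) / E) ^ 2 := by gcongr
    _ ≤ _ := succ_mul_sq_le_besselJ_sq_div_l2normSq hlam (by linarith)
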